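/- arXiv:2508.02602 — 2 statements merged into one kernel-verified Lean document; each statement's English description precedes it below -/
import Mathlib

section
/- Let μ and ν be nonnegative integrable functions on a measure space Z. Fix α ∈ (0,1) and suppose there exists t > 0 such that the set A* = {z : μ(z) ≥ t·ν(z)} satisfies ∫_{A*} μ = 1 - α. Then for every measurable set A with ∫_A μ ≥ 1 - α, we have ∫_{A*} ν ≤ ∫_A ν. -/
open MeasureTheory Set

/-- Neyman–Pearson lemma (set-optimization form): among all measurable sets `A` with
`∫_A μ ≥ 1 - α`, the likelihood-ratio super-level set `A* = {z | μ z ≥ t ν z}` with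
`∫_{A*} μ = 1 - α` minimizes the `ν`-mass. -/
theorem stmt_3 {Z : Type*} [MeasurableSpace Z] (ζ : Measure Z)
    (f g : Z → ℝ) (hf0 : ∀ z, 0 ≤ f z) (hg0 : ∀ z, 0 ≤ g z)
    (hfi : Integrable f ζ) (hgi : Integrable g ζ)
    (α : ℝ) (hα : α ∈ Set.Ioo (0 : ℝ) 1) (t : ℝ) (ht : 0 < t)
    (Astar : Set Z) (hAstar : Astar = {z | t * g z ≤ f z})
    (hmass : ∫ z in Astar, f z ∂ζ = 1 - α) :
    ∀ A : Set Z, MeasurableSet A → (1 - α ≤ ∫ z in A, f z ∂ζ) →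
      ∫ z in Astar, g z ∂ζ ≤ ∫ z in A, g z ∂ζ := by
  intro A hA hAf
  obtain ⟨F, hFm, hfF⟩ := hfi.1
  obtain ⟨G, hGm, hgG⟩ := hgi.1
  set S : Set Z := {z | t * G z ≤ F z} with hS
  have hSm : MeasurableSet S :=
    measurableSet_le (measurable_const.mul hGm.measurable) hFm.measurable
  subst hAstar
  have hAe : {z | t * g z ≤ f z} =ᵐ[ζ] S := by
    filter_upwards [hfF, hgG] with z hfz hgz
    show (t * g z ≤ f z) = (t * G z ≤ F z)
    rw [hfz, hgz]
  have hrS : ζ.restrict {z | t * g z ≤ f z} = ζ.restrict S := Measure.restrict_congr_set hAe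
  rw [hrS] at hmass ⊢
  -- key pointwise inequalities, a.e. on the relevant sets
  have key1 : ∫ z in S \ A, t * g z ∂ζ ≤ ∫ z in S \ A, f z ∂ζ := by
    apply setIntegral_mono_ae_restrict ((hgi.const_mul t).integrableOn) hfi.integrableOn
    filter_upwards [ae_restrict_mem (hSm.diff hA), ae_restrict_of_ae hfF,
      ae_restrict_of_ae hgG] with z hz h1 h2
    rw [h1, h2]; exact hz.1
  have key2 : ∫ z in A \ S, f z ∂ζ ≤ ∫ z in A \ S, t * g z ∂ζ := by
    apply setIntegral_mono_ae_restrict hfi.integrableOn ((hgi.const_mul t).integrableOn)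
    filter_upwards [ae_restrict_mem (hA.diff hSm), ae_restrict_of_ae hfF,
      ae_restrict_of_ae hgG] with z hz h1 h2
    rw [h1, h2]; exact le_of_lt (lt_of_not_ge hz.2)
  have split_f_S : (∫ z in S ∩ A, f z ∂ζ) + ∫ z in S \ A, f z ∂ζ = ∫ z in S, f z ∂ζ :=
    integral_inter_add_diff hA hfi.integrableOn
  have split_f_A : (∫ z in A ∩ S, f z ∂ζ) + ∫ z in A \ S, f z ∂ζ = ∫ z in A, f z ∂ζ :=
    integral_inter_add_diff hSm hfi.integrableOn
  have split_g_S : (∫ z in S ∩ A, g z ∂ζ) + ∫ z in S \ A, g z ∂ζ = ∫ z in S, g z ∂ζ :=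
    integral_inter_add_diff hA hgi.integrableOn
  have split_g_A : (∫ z in A ∩ S, g z ∂ζ) + ∫ z in A \ S, g z ∂ζ = ∫ z in A, g z ∂ζ :=
    integral_inter_add_diff hSm hgi.integrableOn
  have hcomm : S ∩ A = A ∩ S := inter_comm S A
  rw [hcomm] at split_f_S split_g_S
  have hm1 : ∫ z in S \ A, t * g z ∂ζ = t * ∫ z in S \ A, g z ∂ζ := integral_const_mul t _
  have hm2 : ∫ z in A \ S, t * g z ∂ζ = t * ∫ z in A \ S, g z ∂ζ := integral_const_mul t _
  rw [hm1] at key1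
  rw [hm2] at key2
  have hfle : ∫ z in S, f z ∂ζ - ∫ z in A, f z ∂ζ ≤ 0 := by
    rw [hmass]; linarith
  nlinarith [key1, key2, split_f_S, split_f_A, split_g_S, split_g_A, hfle, ht]
end

section
/- Suppose estimators F̂_B of the CDF F(·;θ₀) of λ(X;θ₀) satisfy sup_t |F̂_B(t;θ₀) - F(t;θ₀)| → 0 almost surely as B → ∞, and F(·;θ₀) is continuous. Let ĥ_B(X) = F̂_B(λ(X;θ₀);θ₀) and h(X) = F(λ(X;θ₀);θ₀). Then ĥ_B(X) → h(X) almost surely, and P(ĥ_B(X) ≤ α) → P(h(X) ≤ α) = α for every α ∈ (0,1). -/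
/-!
Write `F = cdf (μ.map lam)`. Since `F` is continuous, monotone and runs from `0` to `1`, for
`β ∈ (0, 1)` the sublevel set `{t | F t ≤ β}` is `Iic t₀` with `F t₀ = β`; hence
`P(F(lam) ≤ β) = β`, and in particular `F(lam)` has no atom at `α`. Almost-sure uniform
convergence of `F̂_B` gives pointwise convergence of `F̂_B(lam)` on the product space, and off the
null event `{F(lam) = α}` the indicators of `{F̂_B(lam) ≤ α}` converge to that of
`{F(lam) ≤ α}`, so the measures converge by dominated convergence.
-/

open MeasureTheory ProbabilityTheory Set Filter Topology

theorem exists_cdf_le (ν : Measure ℝ) {β : ℝ} (hβ : 0 < β) : ∃ t, cdf ν t ≤ β :=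
  ((tendsto_cdf_atBot ν).eventually_le_const hβ).exists

theorem bddAbove_setOf_cdf_le (ν : Measure ℝ) {β : ℝ} (hβ : β < 1) :
    BddAbove {t | cdf ν t ≤ β} := by
  obtain ⟨T, hT⟩ := ((tendsto_cdf_atTop ν).eventually_const_lt hβ).exists
  exact ⟨T, fun t ht => le_of_not_gt fun hTt => (hT.trans_le ((cdf ν).mono hTt.le)).not_ge ht⟩

section ContinuousCDF

variable {ν : Measure ℝ} [IsProbabilityMeasure ν]

theorem measureReal_setOf_cdf_le (hF : Continuous (cdf ν)) {β : ℝ} (hβ : β ∈ Ioo 0 1) :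
    ν.real {t | cdf ν t ≤ β} = β := by
  set S := {t | cdf ν t ≤ β}
  have hbdd : BddAbove S := bddAbove_setOf_cdf_le ν hβ.2
  have hmem : sSup S ∈ S :=
    (isClosed_le hF continuous_const).csSup_mem (exists_cdf_le ν hβ.1) hbdd
  have hS : S = Iic (sSup S) :=
    Subset.antisymm (fun t ht => le_csSup hbdd ht) fun t ht => ((cdf ν).mono ht).trans hmem
  have hright : ∀ᶠ t in 𝓝[>] sSup S, β ≤ cdf ν t :=
    eventually_nhdsWithin_of_forall fun t ht => le_of_lt <| not_le.1 fun h =>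
      (le_csSup hbdd h).not_gt ht
  rw [hS, ← cdf_eq_real]
  exact le_antisymm hmem (ge_of_tendsto hF.continuousWithinAt hright)

theorem measure_setOf_cdf_eq (hF : Continuous (cdf ν)) {α : ℝ} (hα : α ∈ Ioo 0 1) :
    ν {t | cdf ν t = α} = 0 := by
  have hsmall : ∀ β ∈ Ioo 0 α, ν.real {t | cdf ν t = α} ≤ α - β := fun β hβ => calc
    ν.real {t | cdf ν t = α} ≤ ν.real ({t | cdf ν t ≤ α} \ {t | cdf ν t ≤ β}) :=
      measureReal_mono fun t (ht : cdf ν t = α) => ⟨ht.le, by simp [ht, hβ.2]⟩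
    _ = α - β := by
      have hsub : {t | cdf ν t ≤ β} ⊆ {t | cdf ν t ≤ α} := fun t ht => ht.trans hβ.2.le
      rw [measureReal_sdiff hsub (measurableSet_le hF.measurable measurable_const),
        measureReal_setOf_cdf_le hF hα, measureReal_setOf_cdf_le hF ⟨hβ.1, hβ.2.trans hα.2⟩]
  have hgap : Tendsto (fun β => α - β) (𝓝[<] α) (𝓝 0) := by
    have : Tendsto (fun β => α - β) (𝓝 α) (𝓝 (α - α)) := tendsto_const_nhds.sub tendsto_id
    exact (sub_self α ▸ this).mono_left nhdsWithin_le_nhds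
  have hzero : ν.real {t | cdf ν t = α} ≤ 0 :=
    ge_of_tendsto hgap (eventually_of_mem (Ioo_mem_nhdsLT hα.1) hsmall)
  exact (measureReal_eq_zero_iff).mp (le_antisymm hzero measureReal_nonneg)

end ContinuousCDF

theorem cdf_map_eq {Ω : Type*} [MeasurableSpace Ω] {μ : Measure Ω} [IsProbabilityMeasure μ]
    {X : Ω → ℝ} (hX : Measurable X) (t : ℝ) : cdf (μ.map X) t = (μ {ω | X ω ≤ t}).toReal := by
  have := Measure.isProbabilityMeasure_map (μ := μ) hX.aemeasurable
  rw [cdf_eq_real, map_measureReal_apply hX measurableSet_Iic]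
  rfl

theorem tendstoUniformly_of_forall_exists_abs_sub_le {ι X : Type*} [Preorder ι]
    {F : ι → X → ℝ} {f : X → ℝ} (h : ∀ ε > (0 : ℝ), ∃ N, ∀ n ≥ N, ∀ x, |F n x - f x| ≤ ε) :
    TendstoUniformly F f atTop := by
  refine Metric.tendstoUniformly_iff.2 fun ε hε => ?_
  obtain ⟨N, hN⟩ := h (ε / 2) (half_pos hε)
  filter_upwards [eventually_ge_atTop N] with n hn x
  rw [dist_comm, Real.dist_eq]
  linarith [hN n hn x]

theorem tendsto_measure_setOf_le_of_ae_tendsto {ι X : Type*} [MeasurableSpace X] {μ : Measure X}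
    [IsFiniteMeasure μ] {l : Filter ι} [l.IsCountablyGenerated] {f : ι → X → ℝ} {g : X → ℝ}
    {c : ℝ} (hf : ∀ i, Measurable (f i)) (hg : Measurable g)
    (hfg : ∀ᵐ x ∂μ, Tendsto (f · x) l (𝓝 (g x))) (hc : μ {x | g x = c} = 0) :
    Tendsto (fun i => μ {x | f i x ≤ c}) l (𝓝 (μ {x | g x ≤ c})) := by
  refine tendsto_measure_of_ae_tendsto_indicator_of_isFiniteMeasure l
    (measurableSet_le hg measurable_const) (fun i => measurableSet_le (hf i) measurable_const) ?_
  filter_upwards [hfg, measure_eq_zero_iff_ae_notMem.mp hc] with x hx hne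
  rcases lt_or_gt_of_ne (show g x ≠ c from hne) with hlt | hgt
  · filter_upwards [hx.eventually_lt_const hlt] with i hi
    exact iff_of_true hi.le hlt.le
  · filter_upwards [hx.eventually_const_lt hgt] with i hi
    exact iff_of_false hi.not_ge hgt.not_ge

/-- Consistency of estimated p-values: a.s.-uniform consistency of the CDF estimators
`F̂_B` implies almost-sure convergence of the estimated p-value `ĥ_B(X)` to the true
p-value `h(X)`, and convergence of the type-I error `P(ĥ_B(X) ≤ α)` to
`P(h(X) ≤ α) = α`, for every `α ∈ (0,1)`. -/
theorem stmt_11 {Ω Ω' : Type*} [MeasurableSpace Ω] [MeasurableSpace Ω']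
    (μ : Measure Ω) [IsProbabilityMeasure μ] (μ' : Measure Ω') [IsProbabilityMeasure μ']
    (lam : Ω → ℝ) (hlam : Measurable lam)
    (F : ℝ → ℝ) (hFdef : ∀ t, F t = (μ {ω | lam ω ≤ t}).toReal) (hFcont : Continuous F)
    (Fhat : ℕ → Ω' → ℝ → ℝ)
    (hFhatmeas : ∀ B, Measurable fun p : Ω' × ℝ => Fhat B p.1 p.2)
    (hunif : ∀ᵐ ω' ∂μ', ∀ ε > (0 : ℝ), ∃ N, ∀ B ≥ N, ∀ t, |Fhat B ω' t - F t| ≤ ε) :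
    (∀ᵐ q ∂(μ'.prod μ),
        Tendsto (fun B => Fhat B q.1 (lam q.2)) atTop (nhds (F (lam q.2)))) ∧
    ∀ α ∈ Set.Ioo (0 : ℝ) 1,
      (μ {ω | F (lam ω) ≤ α}).toReal = α ∧
      Tendsto (fun B => ((μ'.prod μ) {q | Fhat B q.1 (lam q.2) ≤ α}).toReal)
        atTop (nhds ((μ {ω | F (lam ω) ≤ α}).toReal)) := by
  obtain rfl : F = cdf (μ.map lam) := funext fun t => (hFdef t).trans (cdf_map_eq hlam t).symm
  have := Measure.isProbabilityMeasure_map (μ := μ) hlam.aemeasurable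
  have hae : ∀ᵐ q ∂(μ'.prod μ), Tendsto (fun B => Fhat B q.1 (lam q.2)) atTop
      (𝓝 (cdf (μ.map lam) (lam q.2))) :=
    (Measure.quasiMeasurePreserving_fst.ae hunif).mono fun q hq =>
      (tendstoUniformly_of_forall_exists_abs_sub_le hq).tendsto_at (lam q.2)
  refine ⟨hae, fun α hα => ⟨?_, ?_⟩⟩
  · exact (map_measureReal_apply hlam (measurableSet_le hFcont.measurable
      measurable_const)).symm.trans (measureReal_setOf_cdf_le hFcont hα)
  · have hsnd (s : Set Ω) : (μ'.prod μ) (Prod.snd ⁻¹' s) = μ s := by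
      rw [← univ_prod, Measure.prod_prod, measure_univ, one_mul]
    have hnull : (μ'.prod μ) {q | cdf (μ.map lam) (lam q.2) = α} = 0 :=
      (hsnd _).trans <| (Measure.map_apply hlam (measurableSet_eq_fun hFcont.measurable
        measurable_const)).symm.trans (measure_setOf_cdf_eq hFcont hα)
    have hlim : Tendsto (fun B => (μ'.prod μ) {q | Fhat B q.1 (lam q.2) ≤ α}) atTop
        (𝓝 ((μ'.prod μ) (Prod.snd ⁻¹' {ω | cdf (μ.map lam) (lam ω) ≤ α}))) :=
      tendsto_measure_setOf_le_of_ae_tendsto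
        (fun B => (hFhatmeas B).comp (measurable_fst.prodMk (hlam.comp measurable_snd)))
        ((hFcont.measurable.comp hlam).comp measurable_snd) hae hnull
    rw [hsnd] at hlim
    exact (ENNReal.tendsto_toReal (measure_ne_top _ _)).comp hlim
end
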